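/- Let d be a prime, n ≥ 1, and Γ a symmetric n×n matrix over ZMod d with zero diagonal whose associated weighted graph is two-colorable: there is a partition Fin n = A ∪ B with Γ u v = 0 whenever u,v ∈ A or u,v ∈ B. Then the ZMod d-rank of Γ equals 2·(Matrix.rank Γ_{A,B}), and the Schmidt rank of the graph state satisfies d ^ (Matrix.rank Γ_{A,B}) ≤ r(ψ_Γ) ≤ d ^ (min |A| |B|); in particular the Schmidt measure E_S(ψ_Γ) = log_d r(ψ_Γ) is bounded below by half the rank of the adjacency matrix and above by ⌊n/2⌋. -/

import Mathlib

/-- The graph-state amplitude function of an adjacency matrix `Γ` over `ZMod d`. -/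
noncomputable def graphState (d n : ℕ) (ω : ℂ) (Γ : Matrix (Fin n) (Fin n) (ZMod d)) :
    (Fin n → ZMod d) → ℂ := fun x =>
  (((d : ℝ) ^ (-(n : ℝ) / 2) : ℝ) : ℂ) *
    ω ^ (∑ u : Fin n, ∑ v : Fin n, if u < v then Γ u v * x u * x v else 0).val

/-- The Schmidt rank of `ψ : (Fin n → ZMod d) → ℂ`: the least `R` such that `ψ` is a
sum of `R` product functions. -/
noncomputable def schmidtRank {d n : ℕ} (ψ : (Fin n → ZMod d) → ℂ) : ℕ :=
  sInf {R : ℕ | ∃ f : Fin R → Fin n → ZMod d → ℂ, ∀ x, ψ x = ∑ i, ∏ j, f i j (x j)}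

/-!
Listing the qudits of `A` first, the phase of the graph state is the bilinear form
`x_A ⬝ᵥ Γ_{A,B} *ᵥ x_B`, and `Γ` itself becomes the block matrix `[[0, Γ_{A,B}], [Γ_{A,B}ᵀ, 0]]`,
whose rank is `2 * rank Γ_{A,B}`.

Upper bound: once `x_A` is fixed, the phase is linear in `x_B`, so the state is a product state;
summing over the `d ^ |A|` values of `x_A` (or symmetrically of `x_B`) gives a decomposition.

Lower bound: a decomposition into `R` product terms makes the flattening `(x_A, x_B) ↦ ψ(x)` a
product of matrices through `Fin R`, so its rank is at most `R`. Its columns are, up to a scalar,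
the characters `x_A ↦ ω ^ (x_A ⬝ᵥ w)` for `w` in the image of `Γ_{A,B}`. These are pairwise distinct
because `ω` is primitive, hence linearly independent, so the rank is at least the size
`d ^ rank Γ_{A,B}` of that image.
-/

open Finset Matrix

section ProductDecomposition

variable {ι α : Type*} [Fintype ι]

def HasProductDecomp {K : Type*} [CommSemiring K] (ψ : (ι → α) → K) (R : ℕ) : Prop :=
  ∃ f : Fin R → ι → α → K, ∀ x, ψ x = ∑ i, ∏ j, f i j (x j)

variable [DecidableEq ι]

theorem hasProductDecomp_of_eq_prod_restrict {K : Type*} [CommSemiring K] [Fintype α]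
    [DecidableEq α] (C : Finset ι)
    {ψ : (ι → α) → K} (h : (C → α) → ι → α → K)
    (hψ : ∀ x, ψ x = ∏ j, h (fun u : C => x u) j (x j)) :
    HasProductDecomp ψ (Fintype.card (C → α)) := by
  let e := (Fintype.equivFin (C → α)).symm
  -- the factors on `C` force the summation index to be the restriction of `x` to `C`
  let g : (C → α) → ι → α → K := fun a j k =>
    if hj : j ∈ C then if a ⟨j, hj⟩ = k then h a j k else 0 else h a j k
  refine ⟨fun i => g (e i), fun x => ?_⟩
  have hg : ∀ a, ∏ j, g a j (x j) = if a = (fun u : C => x u) then ψ x else 0 := by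
    intro a
    split_ifs with ha
    · subst ha
      rw [hψ]
      exact prod_congr rfl fun j _ => by by_cases hj : j ∈ C <;> simp [g, hj]
    · obtain ⟨u, hu⟩ := Function.ne_iff.mp ha
      exact prod_eq_zero (mem_univ (u : ι)) (by simp [g, u.2, hu])
  rw [Equiv.sum_comp e (fun a => ∏ j, g a j (x j))]
  simp [hg]

def _root_.Finset.glue (C : Finset ι) (a : C → α) (b : (Cᶜ : Finset ι) → α) : ι → α :=
  fun u => if h : u ∈ C then a ⟨u, h⟩ else b ⟨u, mem_compl.2 h⟩

@[simp]
theorem _root_.Finset.glue_coe_left (C : Finset ι) (a : C → α) (b : (Cᶜ : Finset ι) → α)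
    (i : C) : C.glue a b i = a i :=
  dif_pos i.2

@[simp]
theorem _root_.Finset.glue_coe_right (C : Finset ι) (a : C → α) (b : (Cᶜ : Finset ι) → α)
    (j : (Cᶜ : Finset ι)) : C.glue a b j = b j :=
  dif_neg (mem_compl.1 j.2)

def flatten {K : Type*} (C : Finset ι) (ψ : (ι → α) → K) : Matrix (C → α) ((Cᶜ : Finset ι) → α) K :=
  of fun a b => ψ (C.glue a b)

theorem HasProductDecomp.rank_flatten_le {K : Type*} [Field K] [Fintype α] {ψ : (ι → α) → K}
    {R : ℕ} (hψ : HasProductDecomp ψ R) (C : Finset ι) : (flatten C ψ).rank ≤ R := by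
  obtain ⟨f, hf⟩ := hψ
  have hfac : flatten C ψ = (of fun a i => ∏ j : C, f i j (a j)) *
      (of fun i b => ∏ j : (Cᶜ : Finset ι), f i j (b j)) := by
    ext a b
    simp only [flatten, of_apply, hf, mul_apply]
    refine sum_congr rfl fun i _ => ?_
    rw [← prod_mul_prod_compl C, ← prod_coe_sort C, ← prod_coe_sort Cᶜ]
    simp
  rw [hfac]
  exact (rank_mul_le_right _ _).trans ((rank_le_card_height _).trans_eq (Fintype.card_fin R))

end ProductDecomposition

section Characters

theorem AddChar.map_sum_eq_prod {A M ι : Type*} [AddCommMonoid A] [CommMonoid M]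
    (ψ : AddChar A M) (s : Finset ι) (f : ι → A) : ψ (∑ i ∈ s, f i) = ∏ i ∈ s, ψ (f i) := by
  simpa [← ofAdd_sum] using map_prod ψ.toMonoidHom (fun i => Multiplicative.ofAdd (f i)) s

variable {m F : Type*} [Fintype m] [CommRing F]

def dotChar (χ : AddChar F ℂ) (w : m → F) : AddChar (m → F) ℂ :=
  χ.compAddMonoidHom (AddMonoidHom.mk' (· ⬝ᵥ w) fun a b => add_dotProduct a b w)

theorem dotChar_apply (χ : AddChar F ℂ) (w a : m → F) : dotChar χ w a = χ (a ⬝ᵥ w) :=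
  rfl

theorem dotChar_injective [DecidableEq m] {χ : AddChar F ℂ} (hχ : χ.IsPrimitive) :
    Function.Injective (dotChar (m := m) χ) := by
  intro w w' h
  funext u
  by_contra hne
  refine hχ (sub_ne_zero.2 hne) ?_
  ext t
  have ht := DFunLike.congr_fun h (Pi.single u t)
  simp only [dotChar_apply, single_dotProduct] at ht
  rw [AddChar.mulShift_apply, sub_mul, AddChar.map_sub_eq_div, mul_comm (w u), mul_comm (w' u),
    ht, div_self (χ.val_isUnit _).ne_zero, AddChar.one_apply]

theorem card_range_mulVecLin_le_rank [DecidableEq m] [Fintype F] {n : Type*}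
    [Fintype n] [DecidableEq n]
    {χ : AddChar F ℂ} (hχ : χ.IsPrimitive) (M : Matrix m n F) {c : ℂ} (hc : c ≠ 0) :
    Nat.card (LinearMap.range M.mulVecLin) ≤ (of fun a b => c * χ (a ⬝ᵥ M *ᵥ b)).rank := by
  classical
  have hsmul : (of fun a b => c * χ (a ⬝ᵥ M *ᵥ b)) = c • of fun a b => χ (a ⬝ᵥ M *ᵥ b) := by
    ext; rfl
  rw [hsmul, rank_smul_of_mem_nonZeroDivisors _ (mem_nonZeroDivisors_of_ne_zero hc),
    rank_eq_finrank_span_cols]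
  let v : LinearMap.range M.mulVecLin → (m → F) → ℂ := fun w => dotChar χ w
  have hv : LinearIndependent ℂ v := (AddChar.linearIndependent (m → F) ℂ).comp _
    ((dotChar_injective hχ).comp Subtype.val_injective)
  have hspan : Submodule.span ℂ (Set.range v) ≤
      Submodule.span ℂ (Set.range (of fun a b => χ (a ⬝ᵥ M *ᵥ b)).col) := by
    refine Submodule.span_mono ?_
    rintro _ ⟨⟨_, b, rfl⟩, rfl⟩
    exact ⟨b, rfl⟩
  rw [Nat.card_eq_fintype_card, ← finrank_span_eq_card hv]
  exact Submodule.finrank_mono hspan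

end Characters

theorem Submodule.finrank_prod {K M N : Type*} [Field K] [AddCommGroup M] [Module K M]
    [AddCommGroup N] [Module K N] (p : Submodule K M) (q : Submodule K N)
    [FiniteDimensional K p] [FiniteDimensional K q] :
    Module.finrank K (p.prod q) = Module.finrank K p + Module.finrank K q := by
  have hinj : Function.Injective (p.subtype.prodMap q.subtype) :=
    Prod.map_injective.2 ⟨p.injective_subtype, q.injective_subtype⟩
  rw [← Module.finrank_prod, (LinearEquiv.ofInjective _ hinj).finrank_eq,
    LinearMap.range_prodMap, Submodule.range_subtype, Submodule.range_subtype]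

theorem Matrix.rank_fromBlocks_zero₁₁_zero₂₂ {K l m n o : Type*} [Field K] [Fintype l]
    [Fintype m] [Fintype n] [Fintype o] (B : Matrix n m K) (C : Matrix o l K) :
    (fromBlocks 0 B C 0).rank = B.rank + C.rank := by
  let e₁ := (LinearEquiv.sumArrowLequivProdArrow l m K K).trans (LinearEquiv.prodComm K _ _)
  let e₂ := LinearEquiv.sumArrowLequivProdArrow n o K K
  have hfac : (fromBlocks 0 B C 0).mulVecLin =
      e₂.symm.toLinearMap ∘ₗ (B.mulVecLin.prodMap C.mulVecLin) ∘ₗ e₁.toLinearMap := by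
    refine LinearMap.ext fun x => funext fun i => ?_
    rcases i with i | i <;> simp [e₁, e₂, fromBlocks_mulVec] <;> rfl
  rw [rank, hfac, LinearMap.range_comp, LinearMap.range_comp_of_range_eq_top _ e₁.range,
    LinearEquiv.finrank_map_eq, LinearMap.range_prodMap, Submodule.finrank_prod]
  rfl

section TwoColoring

variable {ι : Type*}

def IsTwoColoring {R : Type*} [Zero R] (Γ : Matrix ι ι R) (A : Finset ι) : Prop :=
  ∀ u v, (u ∈ A ∧ v ∈ A) ∨ (u ∉ A ∧ v ∉ A) → Γ u v = 0

variable [Fintype ι] [DecidableEq ι]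

theorem IsTwoColoring.compl {R : Type*} [Zero R] {Γ : Matrix ι ι R} {A : Finset ι}
    (h : IsTwoColoring Γ A) : IsTwoColoring Γ Aᶜ := fun u v huv =>
  h u v (by simpa only [mem_compl, not_not, or_comm] using huv)

theorem IsTwoColoring.sum_sum_eq {M : Type*} [AddCommMonoid M] {S : Matrix ι ι M}
    {A : Finset ι} (hS : IsTwoColoring S A) :
    ∑ u, ∑ v, S u v = ∑ u ∈ A, ∑ v ∈ Aᶜ, (S u v + S v u) := by
  have hA : ∀ u ∈ A, ∑ v, S u v = ∑ v ∈ Aᶜ, S u v := fun u hu => by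
    rw [← sum_add_sum_compl A, sum_eq_zero fun v hv => hS u v (.inl ⟨hu, hv⟩), zero_add]
  have hAc : ∀ u ∈ Aᶜ, ∑ v, S u v = ∑ v ∈ A, S u v := fun u hu => by
    rw [← sum_add_sum_compl A, sum_eq_zero (s := Aᶜ) fun v hv =>
      hS u v (.inr ⟨mem_compl.1 hu, mem_compl.1 hv⟩), add_zero]
  rw [← sum_add_sum_compl A, sum_congr rfl hA, sum_congr rfl hAc,
    sum_comm (s := Aᶜ) (f := fun u v => S u v), ← sum_add_distrib]
  exact sum_congr rfl fun u _ => sum_add_distrib.symm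

theorem IsTwoColoring.sum_sum_ite_lt [LinearOrder ι] {R : Type*} [CommSemiring R]
    {Γ : Matrix ι ι R} (hΓ : Γ.IsSymm) {A : Finset ι} (hA : IsTwoColoring Γ A) (x : ι → R) :
    ∑ u, ∑ v, (if u < v then Γ u v * x u * x v else 0) =
      ∑ u ∈ A, ∑ v ∈ Aᶜ, Γ u v * x u * x v := by
  have hS : IsTwoColoring (of fun u v => if u < v then Γ u v * x u * x v else 0) A :=
    fun u v huv => by simp [hA u v huv]
  refine hS.sum_sum_eq.trans (sum_congr rfl fun u hu => sum_congr rfl fun v hv => ?_)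
  have huv : u ≠ v := by rintro rfl; exact mem_compl.1 hv hu
  rcases huv.lt_or_gt with h | h
  · simp [h, h.not_gt]
  · simp [h, h.not_gt, hΓ.apply u v]
    ring

theorem IsTwoColoring.rank_eq {K : Type*} [Field K] {Γ : Matrix ι ι K} (hΓ : Γ.IsSymm)
    {A : Finset ι} (hA : IsTwoColoring Γ A) :
    Γ.rank =
      2 * (Γ.submatrix (fun i : A => (i : ι)) (fun j : (Aᶜ : Finset ι) => (j : ι))).rank := by
  let e : A ⊕ (Aᶜ : Finset ι) ≃ ι :=
    (Equiv.sumCongr (Equiv.refl _) (Equiv.subtypeEquivRight fun _ => mem_compl)).trans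
      (Equiv.sumCompl (· ∈ A))
  have hblocks : Γ.submatrix e e = fromBlocks 0 (Γ.submatrix (↑) (↑)) (Γ.submatrix (↑) (↑))ᵀ 0 := by
    ext (i | i) (j | j)
    · exact hA _ _ (.inl ⟨i.2, j.2⟩)
    · rfl
    · exact (hΓ.apply _ _).symm
    · exact hA _ _ (.inr ⟨mem_compl.1 i.2, mem_compl.1 j.2⟩)
  rw [← rank_submatrix Γ e e, hblocks, rank_fromBlocks_zero₁₁_zero₂₂, rank_transpose, two_mul]

end TwoColoring

section GraphState

variable {d n : ℕ} [NeZero d] {ω : ℂ} {Γ : Matrix (Fin n) (Fin n) (ZMod d)}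
  {A : Finset (Fin n)}

theorem graphState_eq (hω : ω ^ d = 1) (hΓ : Γ.IsSymm) (hA : IsTwoColoring Γ A)
    (x : Fin n → ZMod d) :
    graphState d n ω Γ x = (((d : ℝ) ^ (-(n : ℝ) / 2) : ℝ) : ℂ) *
      AddChar.zmodChar d hω (∑ u ∈ A, ∑ v ∈ Aᶜ, Γ u v * x u * x v) := by
  rw [graphState, hA.sum_sum_ite_lt hΓ]
  rfl

theorem hasProductDecomp_graphState (hω : ω ^ d = 1) (hΓ : Γ.IsSymm) (hA : IsTwoColoring Γ A) :
    HasProductDecomp (graphState d n ω Γ) (d ^ A.card) := by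
  have hψ : ∀ x, graphState d n ω Γ x = ∏ j, (((d : ℝ) ^ (-(1 : ℝ) / 2) : ℝ) : ℂ) *
      AddChar.zmodChar d hω (x j * ∑ u : A, Γ u j * x u) := by
    intro x
    rw [graphState_eq hω hΓ hA, prod_mul_distrib, prod_const, card_univ, Fintype.card_fin,
      ← AddChar.map_sum_eq_prod]
    congr 1
    · rw [← Complex.ofReal_pow, ← Real.rpow_natCast, ← Real.rpow_mul (Nat.cast_nonneg d)]
      ring_nf
    · congr 1
      calc ∑ u ∈ A, ∑ v ∈ Aᶜ, Γ u v * x u * x v = ∑ u ∈ A, ∑ v, Γ u v * x u * x v :=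
            sum_congr rfl fun u hu => sum_subset (subset_univ _) fun v _ hv => by
              rw [hA u v (.inl ⟨hu, by simpa using hv⟩), zero_mul, zero_mul]
        _ = ∑ v, x v * ∑ u : A, Γ u v * x u := by
            rw [sum_comm]
            refine sum_congr rfl fun v _ => ?_
            rw [mul_sum, ← sum_coe_sort A]
            exact sum_congr rfl fun u _ => by ring
  simpa [Fintype.card_fun, ZMod.card] using hasProductDecomp_of_eq_prod_restrict A
    (fun a j k => (((d : ℝ) ^ (-(1 : ℝ) / 2) : ℝ) : ℂ) *
      AddChar.zmodChar d hω (k * ∑ u : A, Γ u j * a u)) hψ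

theorem flatten_graphState (hω : ω ^ d = 1) (hΓ : Γ.IsSymm) (hA : IsTwoColoring Γ A) :
    flatten A (graphState d n ω Γ) = of fun a b => (((d : ℝ) ^ (-(n : ℝ) / 2) : ℝ) : ℂ) *
      AddChar.zmodChar d hω (a ⬝ᵥ Γ.submatrix (↑) (↑) *ᵥ b) := by
  ext a b
  simp only [flatten, of_apply, graphState_eq hω hΓ hA]
  congr 2
  rw [← sum_coe_sort A, dotProduct]
  refine sum_congr rfl fun i _ => ?_
  rw [← sum_coe_sort Aᶜ, mulVec, dotProduct, mul_sum]
  refine sum_congr rfl fun j _ => ?_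
  simp only [glue_coe_left, glue_coe_right, submatrix_apply]
  ring

end GraphState

theorem schmidtRank_two_colorable_general
    (d n : ℕ) (hd : Nat.Prime d)
    (ω : ℂ) (hω : IsPrimitiveRoot ω d)
    (Γ : Matrix (Fin n) (Fin n) (ZMod d)) (hΓsymm : Γ.IsSymm)
    (A : Finset (Fin n))
    (hcol : ∀ u v : Fin n, (u ∈ A ∧ v ∈ A) ∨ (u ∉ A ∧ v ∉ A) → Γ u v = 0) :
    Matrix.rank Γ = 2 * Matrix.rank (Γ.submatrix (fun i : {u // u ∈ A} => (i : Fin n))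
        (fun j : {u // u ∈ Aᶜ} => (j : Fin n))) ∧
      d ^ Matrix.rank (Γ.submatrix (fun i : {u // u ∈ A} => (i : Fin n))
          (fun j : {u // u ∈ Aᶜ} => (j : Fin n)))
        ≤ schmidtRank (graphState d n ω Γ) ∧
      schmidtRank (graphState d n ω Γ) ≤ d ^ min A.card Aᶜ.card := by
  have : Fact d.Prime := ⟨hd⟩
  have hA : IsTwoColoring Γ A := hcol
  have hdecomp := hasProductDecomp_graphState hω.pow_eq_one hΓsymm hA
  refine ⟨hA.rank_eq hΓsymm, le_csInf ⟨_, hdecomp⟩ fun R hR => ?_, ?_⟩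
  · have hc : (((d : ℝ) ^ (-(n : ℝ) / 2) : ℝ) : ℂ) ≠ 0 := by
      exact_mod_cast (Real.rpow_pos_of_pos (Nat.cast_pos.2 hd.pos) _).ne'
    set M := Γ.submatrix (fun i : {u // u ∈ A} => (i : Fin n))
      (fun j : {u // u ∈ Aᶜ} => (j : Fin n))
    calc d ^ M.rank = Nat.card (LinearMap.range M.mulVecLin) := by
          rw [Module.natCard_eq_pow_finrank (K := ZMod d), Nat.card_zmod]; rfl
      _ ≤ (flatten A (graphState d n ω Γ)).rank := by
          rw [flatten_graphState hω.pow_eq_one hΓsymm hA]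
          exact card_range_mulVecLin_le_rank
            (AddChar.zmodChar_primitive_of_primitive_root d hω) _ hc
      _ ≤ R := HasProductDecomp.rank_flatten_le hR A
  · rcases min_choice A.card Aᶜ.card with h | h <;> rw [h]
    · exact Nat.sInf_le hdecomp
    · exact Nat.sInf_le (hasProductDecomp_graphState hω.pow_eq_one hΓsymm hA.compl)

/-- If the weighted graph of `Γ` is two-colorable with parts `A` and `B = Aᶜ`, then the
rank of `Γ` equals twice the rank of the off-diagonal block `Γ_{A,B}`, and the Schmidt
rank of the graph state is bounded below by `d ^ rank Γ_{A,B}` and above by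
`d ^ min |A| |B|`. -/
theorem schmidtRank_two_colorable
    (d n : ℕ) (hd : Nat.Prime d) (hn : 1 ≤ n)
    (ω : ℂ) (hω : IsPrimitiveRoot ω d)
    (Γ : Matrix (Fin n) (Fin n) (ZMod d)) (hΓsymm : Γ.IsSymm) (hΓdiag : ∀ u, Γ u u = 0)
    (A : Finset (Fin n))
    (hcol : ∀ u v : Fin n, (u ∈ A ∧ v ∈ A) ∨ (u ∉ A ∧ v ∉ A) → Γ u v = 0) :
    Matrix.rank Γ = 2 * Matrix.rank (Γ.submatrix (fun i : {u // u ∈ A} => (i : Fin n))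
        (fun j : {u // u ∈ Aᶜ} => (j : Fin n))) ∧
      d ^ Matrix.rank (Γ.submatrix (fun i : {u // u ∈ A} => (i : Fin n))
          (fun j : {u // u ∈ Aᶜ} => (j : Fin n)))
        ≤ schmidtRank (graphState d n ω Γ) ∧
      schmidtRank (graphState d n ω Γ) ≤ d ^ min A.card Aᶜ.card :=
  schmidtRank_two_colorable_general d n hd ω hω Γ hΓsymm A hcol
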